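/- arXiv:2207.00645 — 4 statements merged into one kernel-verified Lean document; each statement's English description precedes it below -/
import Mathlib

section
/- If S and T are symmetric bilinear forms on a finite-dimensional inner product space with S∘T = 0 (composition as endomorphisms), then (S∧S)∘(S∧S) = 2 S²∧S², (S∧S)∘(S∧T) = 0, (S∧S)∘(T∧T) = 0, and (S∧T)∘(S∧T) = S²∧T², where S² = S∘S. -/
open Finset

/-- Kulkarni–Nomizu product of two 2-tensors: (S∧T)_{ijkl}. -/
def KN {n : ℕ} (S T : Fin n → Fin n → ℝ) : Fin n → Fin n → Fin n → Fin n → ℝ :=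
  fun i j k l => S i k * T j l + S j l * T i k - S i l * T j k - S j k * T i l

/-- Composition of 2-tensors (as endomorphisms, indices raised by the standard metric). -/
noncomputable def comp2 {n : ℕ} (S T : Fin n → Fin n → ℝ) : Fin n → Fin n → ℝ :=
  fun i j => ∑ u, S i u * T u j

/-- Composition of curvature-type 4-tensors: (A∘B)_{ijkl} = (1/2) A_{ij}^{uv} B_{uvkl}. -/
noncomputable def comp4 {n : ℕ} (A B : Fin n → Fin n → Fin n → Fin n → ℝ) :
    Fin n → Fin n → Fin n → Fin n → ℝ :=
  fun i j k l => (1 / 2 : ℝ) * ∑ u, ∑ v, A i j u v * B u v k l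

/-- Partial (Ricci-type) trace of a 4-tensor: (tr A)_{ij} = A_{iuj}^{u}. -/
noncomputable def ptr {n : ℕ} (A : Fin n → Fin n → Fin n → Fin n → ℝ) :
    Fin n → Fin n → ℝ :=
  fun i j => ∑ u, A i u j u

/-- Full trace of a 2-tensor. -/
noncomputable def tr2 {n : ℕ} (S : Fin n → Fin n → ℝ) : ℝ := ∑ i, S i i

/-- Inner product of 2-tensors (standard metric). -/
noncomputable def inner2 {n : ℕ} (S T : Fin n → Fin n → ℝ) : ℝ := ∑ i, ∑ j, S i j * T i j


/-! For arbitrary 2-tensors, `(A∧B)∘(C∧D) = (A∘C)∧(B∘D) + (A∘D)∧(B∘C)`: expanding the contraction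
gives sixteen terms, which pair up to cancel the factor `1/2`. For symmetric `S`, `T` the
hypothesis `S∘T = 0` also gives `T∘S = (S∘T)ᵀ = 0`, so in each of the four products only the
terms built from `S²` and `T²` survive. -/

lemma KN_zero_left {n : ℕ} (T : Fin n → Fin n → ℝ) : KN 0 T = 0 := by
  funext i j k l
  simp [KN]

lemma KN_zero_right {n : ℕ} (S : Fin n → Fin n → ℝ) : KN S 0 = 0 := by
  funext i j k l
  simp [KN]

lemma comp2_apply_swap {n : ℕ} {S T : Fin n → Fin n → ℝ}
    (hS : ∀ i j, S i j = S j i) (hT : ∀ i j, T i j = T j i) (i j : Fin n) :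
    comp2 T S i j = comp2 S T j i :=
  sum_congr rfl fun u _ => by rw [hS, hT, mul_comm]

lemma comp4_KN_KN {n : ℕ} (A B C D : Fin n → Fin n → ℝ) :
    comp4 (KN A B) (KN C D) = KN (comp2 A C) (comp2 B D) + KN (comp2 A D) (comp2 B C) := by
  funext i j k l
  -- Factors are ordered so that `sum_mul_sum` sums the first over `u` and the second over `v`,
  -- matching the summation indices of the left-hand side term by term.
  have hsum : ∑ u, ∑ v, KN A B i j u v * KN C D u v k l =
      comp2 A C i k * comp2 B D j l + comp2 A D i k * comp2 B C j l
      - comp2 A C i l * comp2 B D j k - comp2 A D i l * comp2 B C j k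
      + comp2 B C i k * comp2 A D j l + comp2 B D i k * comp2 A C j l
      - comp2 B C i l * comp2 A D j k - comp2 B D i l * comp2 A C j k
      - comp2 B C j k * comp2 A D i l - comp2 B D j k * comp2 A C i l
      + comp2 B C j l * comp2 A D i k + comp2 B D j l * comp2 A C i k
      - comp2 A C j k * comp2 B D i l - comp2 A D j k * comp2 B C i l
      + comp2 A C j l * comp2 B D i k + comp2 A D j l * comp2 B C i k := by
    simp only [comp2, KN, sum_mul_sum, ← sum_add_distrib, ← sum_sub_distrib]
    exact sum_congr rfl fun u _ => sum_congr rfl fun v _ => by ring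
  simp only [comp4, Pi.add_apply]
  rw [hsum]
  simp only [KN]
  ring

theorem stmt1 {n : ℕ} (S T : Fin n → Fin n → ℝ)
    (hS : ∀ i j, S i j = S j i) (hT : ∀ i j, T i j = T j i)
    (hST : comp2 S T = fun _ _ => 0) :
    (comp4 (KN S S) (KN S S) =
      fun i j k l => 2 * KN (comp2 S S) (comp2 S S) i j k l) ∧
    (comp4 (KN S S) (KN S T) = fun _ _ _ _ => 0) ∧
    (comp4 (KN S S) (KN T T) = fun _ _ _ _ => 0) ∧
    (comp4 (KN S T) (KN S T) = KN (comp2 S S) (comp2 T T)) := by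
  have hST₀ : comp2 S T = 0 := hST
  have hTS₀ : comp2 T S = 0 := by
    funext i j
    rw [comp2_apply_swap hS hT, hST₀]
    rfl
  refine ⟨?_, ?_, ?_, ?_⟩ <;>
    simp only [comp4_KN_KN, hST₀, hTS₀, KN_zero_left, KN_zero_right, add_zero]
  · funext i j k l
    simp only [Pi.add_apply, two_mul]
  · rfl
  · rfl
end

section
/- With notation as in the product-of-spaceforms setup (dimensions m and n, sectional curvatures μ and ν, ambient dimension m+n ≥ 3), the Weyl part of R := (μ/2) g∧g + (ν/2) h∧h equals W = [(μ+ν)/(2(m+n−1)(m+n−2))] · ( n(n−1) g∧g − 2(n−1)(m−1) g∧h + m(m−1) h∧h ), where W := R − P ∧ ḡ and P := (1/(m+n−2))(Ric − J ḡ) with Ric = tr R, J = tr Ric/(2(m+n−1)). -/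
/-!
The Ricci contraction of a Kulkarni–Nomizu product is
`tr (S ∧ T) = (tr T) S + (tr S) T - S T - T S`. Since `g` and `h` are complementary orthogonal
projections of traces `m` and `n`, this gives `Ric = μ (m - 1) g + ν (n - 1) h` and
`Scal = μ m (m - 1) + ν n (n - 1)`. Substituting into `R - P ∧ (g + h)` and expanding the
Kulkarni–Nomizu products bilinearly yields the formula.
-/

open Finset

/-- The first-factor metric on ℝ^m ⊕ ℝ^n, extended by zero. -/
def gF (m n : ℕ) : Fin (m + n) → Fin (m + n) → ℝ :=
  fun i j => if i = j ∧ (i : ℕ) < m then 1 else 0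

/-- The second-factor metric on ℝ^m ⊕ ℝ^n, extended by zero. -/
def hF (m n : ℕ) : Fin (m + n) → Fin (m + n) → ℝ :=
  fun i j => if i = j ∧ m ≤ (i : ℕ) then 1 else 0

/-- The standard inner product ḡ = g + h on ℝ^{m+n}. -/
def gbar (m n : ℕ) : Fin (m + n) → Fin (m + n) → ℝ :=
  fun i j => if i = j then 1 else 0

section General

variable {N : ℕ}

theorem ptr_KN (S T : Fin N → Fin N → ℝ) (i j : Fin N) :
    ptr (KN S T) i j = S i j * tr2 T + T i j * tr2 S - comp2 S T i j - comp2 T S i j := by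
  simp only [ptr, KN, tr2, comp2, sum_add_distrib, sum_sub_distrib, ← mul_sum, ← sum_mul]
  simp only [mul_comm]

theorem ptr_linear_comb (a b : ℝ) (A B : Fin N → Fin N → Fin N → Fin N → ℝ) :
    ptr (fun i j k l => a * A i j k l + b * B i j k l) =
      fun i j => a * ptr A i j + b * ptr B i j := by
  funext i j
  simp only [ptr, sum_add_distrib, ← mul_sum]

theorem tr2_linear_comb (a b : ℝ) (S T : Fin N → Fin N → ℝ) :
    tr2 (fun i j => a * S i j + b * T i j) = a * tr2 S + b * tr2 T := by
  simp only [tr2, sum_add_distrib, ← mul_sum]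

end General

section Product

variable (m n : ℕ)

theorem tr2_gF : tr2 (gF m n) = m := by
  simp only [tr2, Fin.sum_univ_add]
  simp [gF]

theorem tr2_hF : tr2 (hF m n) = n := by
  simp only [tr2, Fin.sum_univ_add]
  simp [hF]

theorem comp2_gF_self : comp2 (gF m n) (gF m n) = gF m n := by
  funext i j
  rw [comp2, sum_eq_single i] <;> grind [gF]

theorem comp2_hF_self : comp2 (hF m n) (hF m n) = hF m n := by
  funext i j
  rw [comp2, sum_eq_single i] <;> grind [hF]

theorem gbar_eq_gF_add_hF (i j : Fin (m + n)) : gbar m n i j = gF m n i j + hF m n i j := by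
  rcases eq_or_ne i j with rfl | hij
  · by_cases hi : (i : ℕ) < m <;> simp [gbar, gF, hF, hi]
  · simp [gbar, gF, hF, hij]

noncomputable def productCurvature (μ ν : ℝ) :
    Fin (m + n) → Fin (m + n) → Fin (m + n) → Fin (m + n) → ℝ :=
  fun i j k l => (μ / 2) * KN (gF m n) (gF m n) i j k l + (ν / 2) * KN (hF m n) (hF m n) i j k l

theorem ptr_productCurvature (μ ν : ℝ) :
    ptr (productCurvature m n μ ν) =
      fun i j => μ * ((m : ℝ) - 1) * gF m n i j + ν * ((n : ℝ) - 1) * hF m n i j := by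
  unfold productCurvature
  rw [ptr_linear_comb]
  funext i j
  rw [ptr_KN, ptr_KN, tr2_gF, tr2_hF, comp2_gF_self, comp2_hF_self]
  ring

end Product

theorem stmt5 (m n : ℕ) (hmn : 3 ≤ m + n) (μ ν : ℝ)
    (R : Fin (m + n) → Fin (m + n) → Fin (m + n) → Fin (m + n) → ℝ)
    (hR : R = fun i j k l =>
      (μ / 2) * KN (gF m n) (gF m n) i j k l + (ν / 2) * KN (hF m n) (hF m n) i j k l)
    (Ric : Fin (m + n) → Fin (m + n) → ℝ) (hRic : Ric = ptr R)
    (J : ℝ) (hJ : J = tr2 Ric / (2 * ((m : ℝ) + n - 1)))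
    (P : Fin (m + n) → Fin (m + n) → ℝ)
    (hP : P = fun i j => (Ric i j - J * gbar m n i j) / ((m : ℝ) + n - 2))
    (W : Fin (m + n) → Fin (m + n) → Fin (m + n) → Fin (m + n) → ℝ)
    (hW : W = fun i j k l => R i j k l - KN P (gbar m n) i j k l) :
    W = fun i j k l =>
      ((μ + ν) / (2 * ((m : ℝ) + n - 1) * ((m : ℝ) + n - 2))) *
        ((n : ℝ) * ((n : ℝ) - 1) * KN (gF m n) (gF m n) i j k l
          - 2 * ((n : ℝ) - 1) * ((m : ℝ) - 1) * KN (gF m n) (hF m n) i j k l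
          + (m : ℝ) * ((m : ℝ) - 1) * KN (hF m n) (hF m n) i j k l) := by
  have hRic' : Ric = fun i j =>
      μ * ((m : ℝ) - 1) * gF m n i j + ν * ((n : ℝ) - 1) * hF m n i j := by
    rw [hRic, hR]
    exact ptr_productCurvature m n μ ν
  have hJ' : J = (μ * m * ((m : ℝ) - 1) + ν * n * ((n : ℝ) - 1)) / (2 * ((m : ℝ) + n - 1)) := by
    rw [hJ, hRic', tr2_linear_comb, tr2_gF, tr2_hF]
    ring
  have hdim : (3 : ℝ) ≤ m + n := by exact_mod_cast hmn
  have hdim₁ : (m : ℝ) + n - 1 ≠ 0 := by linarith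
  have hdim₂ : (m : ℝ) + n - 2 ≠ 0 := by linarith
  funext i j k l
  simp only [hW, hR, hP, hRic', hJ', KN, gbar_eq_gF_add_hF]
  field_simp
  ring
end

section
/- For the 2+4 product model on ℝ⁶ with sectional curvatures μ (on the 2-dimensional factor) and λ (on the 4-dimensional factor), the pointwise invariants take the values Q = −(12/25)(μ³ − 7λμ² + 33λ²μ − 9λ³), L₁ = 12(μ+λ)²(μ−3λ), L₂ = (6/25)(μ+λ)²(7μ−33λ), and L₃ = (39/25)(μ+λ)³. -/
open Finset

/-- The first-factor metric on ℝ^m ⊕ ℝ^{6-m} ≅ ℝ⁶, extended by zero. -/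
def g6 (m : ℕ) : Fin 6 → Fin 6 → ℝ := fun i j => if i = j ∧ (i : ℕ) < m then 1 else 0

/-- The second-factor metric on ℝ^m ⊕ ℝ^{6-m} ≅ ℝ⁶, extended by zero. -/
def h6 (m : ℕ) : Fin 6 → Fin 6 → ℝ := fun i j => if i = j ∧ m ≤ (i : ℕ) then 1 else 0

/-- The standard inner product ḡ on ℝ⁶. -/
def gb6 : Fin 6 → Fin 6 → ℝ := fun i j => if i = j then 1 else 0

/-- Curvature model of a product of spaceforms of dimensions m and 6−m with
sectional curvatures μ and ν: R = (μ/2) g∧g + (ν/2) h∧h. -/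
noncomputable def Rm (m : ℕ) (μ ν : ℝ) : Fin 6 → Fin 6 → Fin 6 → Fin 6 → ℝ :=
  fun i j k l => (μ / 2) * KN (g6 m) (g6 m) i j k l + (ν / 2) * KN (h6 m) (h6 m) i j k l

/-- J = tr_ḡ(Ric)/10 in dimension six. -/
noncomputable def Jm (m : ℕ) (μ ν : ℝ) : ℝ := tr2 (ptr (Rm m μ ν)) / 10

/-- Schouten tensor P = (Ric − Jḡ)/4 in dimension six. -/
noncomputable def Pm (m : ℕ) (μ ν : ℝ) : Fin 6 → Fin 6 → ℝ :=
  fun i j => (ptr (Rm m μ ν) i j - Jm m μ ν * gb6 i j) / 4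

/-- Trace-free Schouten tensor E = P − (J/6)ḡ. -/
noncomputable def Em (m : ℕ) (μ ν : ℝ) : Fin 6 → Fin 6 → ℝ :=
  fun i j => Pm m μ ν i j - (Jm m μ ν / 6) * gb6 i j

/-- Weyl tensor W = R − P∧ḡ. -/
noncomputable def Wm (m : ℕ) (μ ν : ℝ) : Fin 6 → Fin 6 → Fin 6 → Fin 6 → ℝ :=
  fun i j k l => Rm m μ ν i j k l - KN (Pm m μ ν) gb6 i j k l

/-- W² = W∘W. -/
noncomputable def W2m (m : ℕ) (μ ν : ℝ) := comp4 (Wm m μ ν) (Wm m μ ν)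

/-- W³ = W∘W∘W. -/
noncomputable def W3m (m : ℕ) (μ ν : ℝ) := comp4 (Wm m μ ν) (W2m m μ ν)

/-- Q = −(40/9)J³ + 16J|E|² − 16 tr E³ − 8 W_{ijkl}E^{ik}E^{jl}. -/
noncomputable def Qm (m : ℕ) (μ ν : ℝ) : ℝ :=
  -(40 / 9) * (Jm m μ ν) ^ 3 + 16 * Jm m μ ν * inner2 (Em m μ ν) (Em m μ ν)
    - 16 * tr2 (comp2 (Em m μ ν) (comp2 (Em m μ ν) (Em m μ ν)))
    - 8 * ∑ i, ∑ j, ∑ k, ∑ l, Wm m μ ν i j k l * Em m μ ν i k * Em m μ ν j l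

/-- L₁ = 96⟨E, tr W²⟩. -/
noncomputable def L1m (m : ℕ) (μ ν : ℝ) : ℝ := 96 * inner2 (Em m μ ν) (ptr (W2m m μ ν))

/-- L₂ = 16⟨E, tr W²⟩ − (4/3) J tr² W². -/
noncomputable def L2m (m : ℕ) (μ ν : ℝ) : ℝ :=
  16 * inner2 (Em m μ ν) (ptr (W2m m μ ν)) - (4 / 3) * Jm m μ ν * tr2 (ptr (W2m m μ ν))

/-- L₃ = 4 tr² W³. -/
noncomputable def L3m (m : ℕ) (μ ν : ℝ) : ℝ := 4 * tr2 (ptr (W3m m μ ν))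

/-!
In the orthonormal basis adapted to ℝ² ⊕ ℝ⁴ every tensor in sight is diagonal: the 2-tensors
are diagonal matrices constant on the two blocks, and the 4-tensors have the form
`F i j (δ_ik δ_jl - δ_il δ_jk)`. This class is produced by Kulkarni–Nomizu products of diagonal
matrices, and is preserved by `∘` (which multiplies the weights `F`) and by Ricci contraction
(which sums them). Hence `E = diag((μ - 3λ)/6, (3λ - μ)/12)` and `W = (μ + λ) W₀` with
weights `3/5`, `-3/20`, `1/10` on the three kinds of coordinate planes, and every invariant
becomes a finite sum over the blocks.
-/

open Matrix

section DiagonalTensors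

variable {n : ℕ}

-- The curvature-type tensor with sectional curvature `F i j` on the coordinate plane `e_i ∧ e_j`.
def diagCurv (F : Fin n → Fin n → ℝ) : Fin n → Fin n → Fin n → Fin n → ℝ :=
  fun i j k l => F i j *
    ((1 : Matrix (Fin n) (Fin n) ℝ) i k * (1 : Matrix (Fin n) (Fin n) ℝ) j l
      - (1 : Matrix (Fin n) (Fin n) ℝ) i l * (1 : Matrix (Fin n) (Fin n) ℝ) j k)

lemma comp2_diagonal (a b : Fin n → ℝ) :
    comp2 (diagonal a) (diagonal b) = diagonal (fun i => a i * b i) :=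
  diagonal_mul_diagonal a b

lemma tr2_diagonal (a : Fin n → ℝ) : tr2 (diagonal a) = ∑ i, a i :=
  trace_diagonal a

lemma inner2_diagonal (a b : Fin n → ℝ) :
    inner2 (diagonal a) (diagonal b) = ∑ i, a i * b i := by
  simp [inner2, diagonal_apply, ite_mul, mul_ite]

lemma diagonal_apply_eq_mul_one_apply (a : Fin n → ℝ) (i k : Fin n) :
    diagonal a i k = a i * (1 : Matrix (Fin n) (Fin n) ℝ) i k := by
  rw [← diagonal_mul, Matrix.mul_one]

lemma KN_diagonal (a b : Fin n → ℝ) :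
    KN (diagonal a) (diagonal b) = diagCurv (fun i j => a i * b j + a j * b i) := by
  funext i j k l
  simp only [KN, diagCurv, diagonal_apply_eq_mul_one_apply]
  ring

lemma ptr_diagCurv (F : Fin n → Fin n → ℝ) :
    ptr (diagCurv F) = diagonal (fun i => ∑ u, F i u - F i i) := by
  funext i j
  simp only [ptr, diagCurv, one_apply, if_true, mul_one, mul_ite, mul_zero, mul_sub,
    Finset.sum_sub_distrib, Finset.sum_ite_irrel, Finset.sum_const_zero, Finset.sum_ite_eq',
    Finset.mem_univ, diagonal_apply]
  split_ifs <;> simp_all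

lemma comp4_diagCurv (G H : Fin n → Fin n → ℝ) (hH : ∀ i j, H i j = H j i) :
    comp4 (diagCurv G) (diagCurv H) = diagCurv (fun i j => G i j * H i j) := by
  funext i j k l
  simp only [comp4, diagCurv, one_apply, mul_ite, ite_mul, mul_one, mul_zero, zero_mul,
    sub_mul, mul_sub, Finset.sum_sub_distrib, Finset.sum_ite_eq', Finset.mem_univ, if_true]
  split_ifs <;> subst_vars <;> simp_all <;> ring

lemma sum_diagCurv_mul_diagonal_mul_diagonal (F : Fin n → Fin n → ℝ) (e : Fin n → ℝ) :
    ∑ i, ∑ j, ∑ k, ∑ l, diagCurv F i j k l * diagonal e i k * diagonal e j l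
      = ∑ i, ∑ j, F i j * e i * e j - ∑ i, F i i * e i ^ 2 := by
  have inner (i j : Fin n) : ∑ k, ∑ l, diagCurv F i j k l * diagonal e i k * diagonal e j l
      = F i j * e i * e j - if i = j then F i i * e i ^ 2 else 0 := by
    simp only [diagCurv, one_apply, mul_ite, mul_one, mul_zero, diagonal_apply, ite_mul, zero_mul,
      Finset.sum_ite_eq, Finset.mem_univ, if_true]
    split_ifs <;> simp_all
    ring
  simp only [inner, Finset.sum_sub_distrib, Finset.sum_ite_eq, Finset.mem_univ, if_true]

end DiagonalTensors

section ProductModel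

def blockConst (m : ℕ) (a b : ℝ) (i : Fin 6) : ℝ := if (i : ℕ) < m then a else b

lemma g6_eq_diagonal (m : ℕ) : g6 m = diagonal (blockConst m 1 0) := by
  funext i j
  simp only [g6, diagonal_apply, blockConst]
  split_ifs <;> simp_all
  omega

lemma h6_eq_diagonal (m : ℕ) : h6 m = diagonal (blockConst m 0 1) := by
  funext i j
  simp only [h6, diagonal_apply, blockConst]
  split_ifs <;> simp_all
  omega

lemma gb6_eq_diagonal : gb6 = diagonal (fun _ => 1) := rfl

lemma Rm_eq_diagCurv (m : ℕ) (μ ν : ℝ) :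
    Rm m μ ν = diagCurv (fun i j => μ * blockConst m 1 0 i * blockConst m 1 0 j
      + ν * blockConst m 0 1 i * blockConst m 0 1 j) := by
  funext i j k l
  simp only [Rm, g6_eq_diagonal, h6_eq_diagonal, KN_diagonal, diagCurv]
  ring

variable (μ lam : ℝ)

lemma ptr_Rm_two : ptr (Rm 2 μ lam) = diagonal (blockConst 2 μ (3 * lam)) := by
  rw [Rm_eq_diagCurv, ptr_diagCurv]
  congr 1
  funext i
  fin_cases i <;> simp +decide only [Fin.sum_univ_six, blockConst, if_true, if_false] <;> ring

lemma Jm_two : Jm 2 μ lam = (μ + 6 * lam) / 5 := by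
  rw [Jm, ptr_Rm_two, tr2_diagonal]
  simp +decide only [Fin.sum_univ_six, blockConst, if_true, if_false]
  ring

lemma Pm_two :
    Pm 2 μ lam = diagonal (blockConst 2 ((2 * μ - 3 * lam) / 10) ((9 * lam - μ) / 20)) := by
  funext i j
  simp only [Pm, ptr_Rm_two, Jm_two, gb6, diagonal_apply, blockConst]
  split_ifs <;> ring

lemma Em_two :
    Em 2 μ lam = diagonal (blockConst 2 ((μ - 3 * lam) / 6) ((3 * lam - μ) / 12)) := by
  funext i j
  simp only [Em, Pm_two, Jm_two, gb6, diagonal_apply, blockConst]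
  split_ifs <;> ring

-- The Weyl tensor of the product is `(μ + λ)` times the constant tensor with these weights.
noncomputable def weylWeight (i j : Fin 6) : ℝ :=
  blockConst 2 (blockConst 2 (3 / 5) (-3 / 20) j) (blockConst 2 (-3 / 20) (1 / 10) j) i

lemma weylWeight_comm (i j : Fin 6) : weylWeight i j = weylWeight j i := by
  simp only [weylWeight, blockConst]
  split_ifs <;> rfl

lemma Wm_two : Wm 2 μ lam = diagCurv (fun i j => (μ + lam) * weylWeight i j) := by
  have hKN : KN (Pm 2 μ lam) gb6 = diagCurv (fun i j =>
      blockConst 2 ((2 * μ - 3 * lam) / 10) ((9 * lam - μ) / 20) i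
        + blockConst 2 ((2 * μ - 3 * lam) / 10) ((9 * lam - μ) / 20) j) := by
    rw [Pm_two, gb6_eq_diagonal, KN_diagonal]
    simp only [mul_one]
  funext i j k l
  simp only [Wm, Rm_eq_diagCurv, hKN, diagCurv, weylWeight, blockConst]
  split_ifs <;> ring

lemma W2m_two : W2m 2 μ lam = diagCurv (fun i j => (μ + lam) ^ 2 * weylWeight i j ^ 2) := by
  rw [W2m, Wm_two, comp4_diagCurv _ _ fun i j => by rw [weylWeight_comm]]
  congr 1
  funext i j
  ring

lemma W3m_two : W3m 2 μ lam = diagCurv (fun i j => (μ + lam) ^ 3 * weylWeight i j ^ 3) := by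
  rw [W3m, W2m_two, Wm_two, comp4_diagCurv _ _ fun i j => by rw [weylWeight_comm]]
  congr 1
  funext i j
  ring

lemma inner2_Em_ptr_W2m_two :
    inner2 (Em 2 μ lam) (ptr (W2m 2 μ lam)) = (μ + lam) ^ 2 * (μ - 3 * lam) / 8 := by
  rw [W2m_two, Em_two, ptr_diagCurv, inner2_diagonal]
  simp +decide only [weylWeight, Fin.sum_univ_six, blockConst, if_true, if_false]
  ring

lemma tr2_ptr_W2m_two : tr2 (ptr (W2m 2 μ lam)) = 6 / 5 * (μ + lam) ^ 2 := by
  rw [W2m_two, ptr_diagCurv, tr2_diagonal]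
  simp +decide only [weylWeight, Fin.sum_univ_six, blockConst, if_true, if_false]
  ring

lemma tr2_ptr_W3m_two : tr2 (ptr (W3m 2 μ lam)) = 39 / 100 * (μ + lam) ^ 3 := by
  rw [W3m_two, ptr_diagCurv, tr2_diagonal]
  simp +decide only [weylWeight, Fin.sum_univ_six, blockConst, if_true, if_false]
  ring

lemma Qm_two :
    Qm 2 μ lam = -(12 / 25) * (μ ^ 3 - 7 * lam * μ ^ 2 + 33 * lam ^ 2 * μ - 9 * lam ^ 3) := by
  rw [Qm, Jm_two, Em_two, Wm_two, comp2_diagonal, comp2_diagonal, inner2_diagonal, tr2_diagonal,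
    sum_diagCurv_mul_diagonal_mul_diagonal]
  simp +decide only [weylWeight, Fin.sum_univ_six, blockConst, if_true, if_false]
  ring

end ProductModel

theorem stmt10 (μ lam : ℝ) :
    Qm 2 μ lam = -(12 / 25) * (μ ^ 3 - 7 * lam * μ ^ 2 + 33 * lam ^ 2 * μ - 9 * lam ^ 3) ∧
    L1m 2 μ lam = 12 * (μ + lam) ^ 2 * (μ - 3 * lam) ∧
    L2m 2 μ lam = (6 / 25) * (μ + lam) ^ 2 * (7 * μ - 33 * lam) ∧
    L3m 2 μ lam = (39 / 25) * (μ + lam) ^ 3 := by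
  refine ⟨Qm_two μ lam, ?_, ?_, ?_⟩
  · rw [L1m, inner2_Em_ptr_W2m_two]
    ring
  · rw [L2m, inner2_Em_ptr_W2m_two, Jm_two, tr2_ptr_W2m_two]
    ring
  · rw [L3m, tr2_ptr_W3m_two]
    ring
end

section
/- In the 2+4 product model on ℝ⁶ with μ = 0 and λ = 1 (flat T² times round S⁴), L₁ = −36. In particular L₁ < 0. -/
open Finset

lemma hgb : ∀ i j : Fin 6, gb6 i j = g6 2 i j + h6 2 i j := by
  intro i j; fin_cases i <;> fin_cases j <;>
    simp (config := { decide := true }) [gb6, g6, h6]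

lemma hJ : Jm 2 0 1 = 6 / 5 := by
  simp only [Jm, tr2, ptr, Rm, KN, g6, h6, Fin.sum_univ_six, Fin.isValue]
  simp (config := { decide := true }) only []
  norm_num

lemma hP : ∀ i j : Fin 6, Pm 2 0 1 i j = (-3/10) * g6 2 i j + (9/20) * h6 2 i j := by
  intro i j
  fin_cases i <;> fin_cases j <;>
    (simp only [Pm, hJ, ptr, Rm, KN, g6, h6, gb6, Fin.sum_univ_six, Fin.isValue]
     simp (config := { decide := true }) only []
     norm_num)

lemma hE : ∀ i j : Fin 6, Em 2 0 1 i j = (-1/2) * g6 2 i j + (1/4) * h6 2 i j := by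
  intro i j
  simp only [Em]
  rw [hP, hJ, hgb]
  ring

lemma hW : ∀ i j k l : Fin 6, Wm 2 0 1 i j k l =
    (3/10) * KN (g6 2) (g6 2) i j k l - (3/40) * KN (g6 2) (h6 2) i j k l
      - (3/40) * KN (h6 2) (g6 2) i j k l + (1/20) * KN (h6 2) (h6 2) i j k l := by
  intro i j k l
  simp only [Wm, Rm, KN]
  rw [hP, hP, hP, hP, hgb, hgb, hgb, hgb]
  ring

set_option maxHeartbeats 4000000 in
lemma pw : ∀ i : Fin 6, ptr (W2m 2 0 1) i i = if (i : ℕ) < 2 then 9/20 else 3/40 := by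
  intro i
  fin_cases i <;>
    (simp only [ptr, W2m, comp4, hW, KN, g6, h6, Fin.sum_univ_six, Fin.isValue]
     simp (config := { decide := true }) only []
     norm_num)

theorem stmt11 : L1m 2 0 1 = -36 ∧ L1m 2 0 1 < 0 := by
  have h : L1m 2 0 1 = -36 := by
    have e0 := pw 0; have e1 := pw 1; have e2 := pw 2
    have e3 := pw 3; have e4 := pw 4; have e5 := pw 5
    simp only [L1m, inner2, hE, Fin.sum_univ_six, Fin.isValue, g6, h6]
    simp (config := { decide := true }) only []
    norm_num [e0, e1, e2, e3, e4, e5]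
  exact ⟨h, by rw [h]; norm_num⟩
end
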